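/- arXiv:math/0207125 — 4 statements merged into one kernel-verified Lean document; each statement's English description precedes it below -/
import Mathlib

section
/- Let X : H0 -> H1 be a contractive solution of the Riccati equation such that the orthogonal projection Q onto G(H0,X) commutes with the orthogonal projection onto every closed B-invariant subspace of H. If Ker(I - X*X) ∩ Ker(V X - X* V*) = {0} (i.e., the kernel of I - X*X meets the kernel of the imaginary part of V X only in 0), then X is the unique contractive solution of the Riccati equation. -/
/-!
Let `Y` be a second contractive solution and `K = Ker (1 + Y*X)`, the set of `x` with
`(x, Xx) ⊥ G(H0,Y)`. Both graphs are `B`-invariant, so `Q` commutes with the projection onto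
`G(H0,Y)` and `G(H0,X)` splits into its parts inside `G(H0,Y)` and `G(H0,Y)ᗮ`; on first
components, `H0 = Ker (X - Y) + K`. For `x ∈ K`, `x = -Y*Xx` and the two contractions force
`X*Xx = x`, whence `K ⊥ Ker (X - Y)`. The operator `A0 + VX` (that is, `B` on `G(H0,X)`) leaves
both summands invariant, and on `K`, where the graph inner product is twice that of `H0`, the
symmetry of `B` makes it symmetric. Since `VX - X*V* = (A0 + VX) - (A0 + VX)*`, this puts `K`
inside `Ker (1 - X*X) ∩ Ker (VX - X*V*) = 0`, so `Ker (X - Y) = H0`.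
-/

open ContinuousLinearMap
open scoped InnerProductSpace

section

variable {𝕜 E F : Type*} [RCLike 𝕜]
  [NormedAddCommGroup E] [InnerProductSpace 𝕜 E]
  [NormedAddCommGroup F] [InnerProductSpace 𝕜 F]

def graphL2 (Z : E →L[𝕜] F) : Submodule 𝕜 (WithLp 2 (E × F)) :=
  (LinearMap.graph Z.toLinearMap).map (WithLp.linearEquiv 2 𝕜 (E × F)).symm.toLinearMap

theorem mem_graphL2 {Z : E →L[𝕜] F} {u : WithLp 2 (E × F)} :
    u ∈ graphL2 Z ↔ u.snd = Z u.fst := by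
  simp [graphL2, LinearMap.mem_graph_iff]

theorem isClosed_graphL2 (Z : E →L[𝕜] F) : IsClosed (graphL2 Z : Set (WithLp 2 (E × F))) := by
  have : (graphL2 Z : Set (WithLp 2 (E × F))) = {u | u.snd = Z u.fst} :=
    Set.ext fun _ ↦ mem_graphL2
  rw [this]
  exact isClosed_eq (by fun_prop) (by fun_prop)

variable [CompleteSpace E] [CompleteSpace F]

instance (Z : E →L[𝕜] F) : CompleteSpace (graphL2 Z) := (isClosed_graphL2 Z).completeSpace_coe

theorem adjoint_apply_apply_eq_of_norm_apply_eq {X : E →L[𝕜] F} (hX : ‖X‖ ≤ 1) {x : E}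
    (hx : ‖X x‖ = ‖x‖) : adjoint X (X x) = x := by
  have hle : ‖adjoint X (X x)‖ ≤ ‖x‖ :=
    calc ‖adjoint X (X x)‖ ≤ ‖adjoint X‖ * ‖X x‖ := le_opNorm _ _
      _ ≤ 1 * ‖x‖ := by rw [LinearIsometryEquiv.norm_map, hx]; gcongr
      _ = ‖x‖ := one_mul _
  have hre : RCLike.re ⟪adjoint X (X x), x⟫_𝕜 = ‖x‖ ^ 2 := by
    rw [adjoint_inner_left, ← hx, inner_self_eq_norm_sq]
  have hsq : ‖adjoint X (X x) - x‖ ^ 2 ≤ 0 := by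
    rw [@norm_sub_sq 𝕜, hre]
    nlinarith [norm_nonneg (adjoint X (X x))]
  rw [← sub_eq_zero, ← norm_eq_zero]
  exact pow_eq_zero_iff two_ne_zero |>.mp (le_antisymm hsq (sq_nonneg _))

theorem ker_one_add_adjoint_comp_le_ker_one_sub {X Y : E →L[𝕜] F} (hX : ‖X‖ ≤ 1)
    (hY : ‖Y‖ ≤ 1) : (1 + adjoint Y ∘L X).ker ≤ (1 - adjoint X ∘L X).ker := by
  intro x (hx : x + adjoint Y (X x) = 0)
  show x - adjoint X (X x) = 0
  rw [sub_eq_zero, eq_comm]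
  refine adjoint_apply_apply_eq_of_norm_apply_eq hX (le_antisymm ?_ ?_)
  · simpa using X.le_of_opNorm_le hX x
  · calc ‖x‖ = ‖-adjoint Y (X x)‖ := congrArg norm (eq_neg_of_add_eq_zero_left hx)
      _ = ‖adjoint Y (X x)‖ := norm_neg _
      _ ≤ ‖X x‖ := by
        simpa using (adjoint Y).le_of_opNorm_le (c := 1)
          (by rwa [LinearIsometryEquiv.norm_map]) (X x)

theorem ker_one_add_adjoint_comp_le_orthogonal {X Y : E →L[𝕜] F} (hX : ‖X‖ ≤ 1)
    (hY : ‖Y‖ ≤ 1) : (1 + adjoint Y ∘L X).ker ≤ (X - Y).kerᗮ := by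
  intro x hx
  refine (Submodule.mem_orthogonal' _ _).2 fun a (ha : X a - Y a = 0) ↦ ?_
  have hxx : x - adjoint X (X x) = 0 := ker_one_add_adjoint_comp_le_ker_one_sub hX hY hx
  have h : ⟪x + adjoint Y (X x), a⟫_𝕜 = 0 := by
    rw [show x + adjoint Y (X x) = 0 from hx, inner_zero_left]
  rw [inner_add_left, adjoint_inner_left, ← sub_eq_zero.1 ha, ← adjoint_inner_left,
    ← sub_eq_zero.1 hxx, ← two_mul] at h
  exact (mul_eq_zero.1 h).resolve_left two_ne_zero

def IsRiccatiSolution (A0 : E →L[𝕜] E) (A1 : F →L[𝕜] F) (V : F →L[𝕜] E) (Z : E →L[𝕜] F) :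
    Prop :=
  A1.comp Z - Z.comp A0 - Z.comp (V.comp Z) + adjoint V = 0

namespace IsRiccatiSolution

variable {A0 : E →L[𝕜] E} {A1 : F →L[𝕜] F} {V : F →L[𝕜] E} {X Y : E →L[𝕜] F}

theorem apply_add_apply (h : IsRiccatiSolution A0 A1 V X) (x : E) :
    X (A0 x + V (X x)) = adjoint V x + A1 (X x) := by
  have hx := congr($h x)
  simp only [add_apply, sub_apply, comp_apply, zero_apply] at hx
  rw [map_add, ← sub_eq_zero, ← neg_eq_zero, ← hx]
  abel

theorem mapsTo_graphL2 {B : WithLp 2 (E × F) →L[𝕜] WithLp 2 (E × F)}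
    (hB : ∀ u : WithLp 2 (E × F),
      WithLp.equiv 2 (E × F) (B u) =
        (A0 (WithLp.equiv 2 (E × F) u).1 + V (WithLp.equiv 2 (E × F) u).2,
         adjoint V (WithLp.equiv 2 (E × F) u).1 + A1 (WithLp.equiv 2 (E × F) u).2))
    (hX : IsRiccatiSolution A0 A1 V X) {u : WithLp 2 (E × F)} (hu : u ∈ graphL2 X) :
    B u ∈ graphL2 X := by
  obtain ⟨hfst, hsnd⟩ := Prod.ext_iff.1 (hB u)
  rw [mem_graphL2] at hu ⊢
  change (B u).fst = A0 u.fst + V u.snd at hfst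
  change (B u).snd = adjoint V u.fst + A1 u.snd at hsnd
  rw [hsnd, hfst, hu, hX.apply_add_apply]

/-- `1 + Y*X` is the Gram operator of the pairing `⟪(x, Xx), (h, Yh)⟫` of the two graphs, so
this is the symmetry of `B` read on `G(H0,X)` and `G(H0,Y)`. -/
theorem intertwine (hA0 : IsSelfAdjoint A0) (hA1 : IsSelfAdjoint A1)
    (hX : IsRiccatiSolution A0 A1 V X) (hY : IsRiccatiSolution A0 A1 V Y) :
    (1 + adjoint Y ∘L X) ∘L (A0 + V ∘L X) = adjoint (A0 + V ∘L Y) ∘L (1 + adjoint Y ∘L X) := by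
  ext x
  refine ext_inner_right 𝕜 fun h ↦ ?_
  have key : ⟪A0 x + V (X x), h⟫_𝕜 + ⟪X (A0 x + V (X x)), Y h⟫_𝕜 =
      ⟪x, A0 h + V (Y h)⟫_𝕜 + ⟪X x, Y (A0 h + V (Y h))⟫_𝕜 := by
    have h0 : ⟪A0 x, h⟫_𝕜 = ⟪x, A0 h⟫_𝕜 := hA0.isSymmetric x h
    have h1 : ⟪A1 (X x), Y h⟫_𝕜 = ⟪X x, A1 (Y h)⟫_𝕜 := hA1.isSymmetric (X x) (Y h)
    rw [hX.apply_add_apply, hY.apply_add_apply]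
    simp only [inner_add_left, inner_add_right, adjoint_inner_left, adjoint_inner_right, h0, h1]
    ring
  simp only [comp_apply, add_apply, one_apply_eq_self, inner_add_left, inner_add_right,
    adjoint_inner_left, map_add] at key ⊢
  linear_combination key

theorem mapsTo_ker_one_add (hA0 : IsSelfAdjoint A0) (hA1 : IsSelfAdjoint A1)
    (hX : IsRiccatiSolution A0 A1 V X) (hY : IsRiccatiSolution A0 A1 V Y) {x : E}
    (hx : x ∈ (1 + adjoint Y ∘L X).ker) : (A0 + V ∘L X) x ∈ (1 + adjoint Y ∘L X).ker := by
  have h := congr($(hX.intertwine hA0 hA1 hY) x)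
  rw [comp_apply, comp_apply, show (1 + adjoint Y ∘L X) x = 0 from hx, map_zero] at h
  exact h

theorem mapsTo_ker_sub (hX : IsRiccatiSolution A0 A1 V X) (hY : IsRiccatiSolution A0 A1 V Y)
    {a : E} (ha : a ∈ (X - Y).ker) : (A0 + V ∘L X) a ∈ (X - Y).ker := by
  have ha' : X a = Y a := sub_eq_zero.1 ha
  have hYa := hY.apply_add_apply a
  rw [← ha'] at hYa
  show X ((A0 + V ∘L X) a) - Y ((A0 + V ∘L X) a) = 0
  rw [add_apply, comp_apply, hX.apply_add_apply, hYa, ha', sub_self]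

theorem inner_add_comp_apply_comm (hA0 : IsSelfAdjoint A0) (hA1 : IsSelfAdjoint A1)
    (hX : IsRiccatiSolution A0 A1 V X) {x y : E} (hx : x ∈ (1 - adjoint X ∘L X).ker)
    (hy : y ∈ (1 - adjoint X ∘L X).ker) :
    ⟪(A0 + V ∘L X) x, y⟫_𝕜 = ⟪x, (A0 + V ∘L X) y⟫_𝕜 := by
  have hx' : adjoint X (X x) = x := (sub_eq_zero.1 (hx : x - adjoint X (X x) = 0)).symm
  have hy' : adjoint X (X y) = y := (sub_eq_zero.1 (hy : y - adjoint X (X y) = 0)).symm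
  have h := congr(⟪$(hX.intertwine hA0 hA1 hX) x, y⟫_𝕜)
  set L := A0 + V ∘L X
  rw [comp_apply, comp_apply, adjoint_inner_left] at h
  simp only [add_apply, one_apply_eq_self, comp_apply, hx', inner_add_left] at h
  rw [adjoint_inner_left, ← adjoint_inner_right X (L x), hy', ← two_mul, ← two_mul] at h
  exact mul_left_cancel₀ two_ne_zero h

theorem ker_one_add_adjoint_comp_le (hA0 : IsSelfAdjoint A0) (hA1 : IsSelfAdjoint A1)
    (hX : IsRiccatiSolution A0 A1 V X) (hY : IsRiccatiSolution A0 A1 V Y)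
    (hX1 : ‖X‖ ≤ 1) (hY1 : ‖Y‖ ≤ 1) (hsup : (X - Y).ker ⊔ (1 + adjoint Y ∘L X).ker = ⊤) :
    (1 + adjoint Y ∘L X).ker ≤
      (1 - adjoint X ∘L X).ker ⊓ (V ∘L X - adjoint X ∘L adjoint V).ker := by
  have hKiso := ker_one_add_adjoint_comp_le_ker_one_sub hX1 hY1
  have hKperp := ker_one_add_adjoint_comp_le_orthogonal hX1 hY1
  intro x hx
  set L := A0 + V ∘L X
  have hLx := hX.mapsTo_ker_one_add hA0 hA1 hY hx
  have hsymm : ∀ y, ⟪L x, y⟫_𝕜 = ⟪x, L y⟫_𝕜 := by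
    intro y
    obtain ⟨a, ha, k, hk, rfl⟩ := Submodule.mem_sup.1 (hsup ▸ Submodule.mem_top : y ∈ _)
    rw [map_add, inner_add_right, inner_add_right,
      Submodule.inner_left_of_mem_orthogonal ha (hKperp hLx),
      Submodule.inner_left_of_mem_orthogonal (hX.mapsTo_ker_sub hY ha) (hKperp hx),
      hX.inner_add_comp_apply_comm hA0 hA1 (hKiso hx) (hKiso hk)]
  have hLadj : adjoint L x = L x :=
    ext_inner_right 𝕜 fun y ↦ by rw [adjoint_inner_left, hsymm]
  simp only [L, map_add, adjoint_comp, hA0.adjoint_eq, add_apply, comp_apply] at hLadj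
  refine ⟨hKiso hx, ?_⟩
  show V (X x) - adjoint X (adjoint V x) = 0
  rw [add_left_cancel hLadj, sub_self]

end IsRiccatiSolution

theorem fst_mem_ker_of_mem_graphL2_of_mem_orthogonal {X Y : E →L[𝕜] F} {u : WithLp 2 (E × F)}
    (hX : u ∈ graphL2 X) (hY : u ∈ (graphL2 Y)ᗮ) : u.fst ∈ (1 + adjoint Y ∘L X).ker := by
  have h : ∀ h : E, ⟪u.fst + adjoint Y (X u.fst), h⟫_𝕜 = 0 := fun h ↦ by
    have := (Submodule.mem_orthogonal' _ _).1 hY (WithLp.toLp 2 (h, Y h)) (mem_graphL2.2 rfl)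
    rwa [WithLp.prod_inner_apply, WithLp.ofLp_toLp, WithLp.ofLp_fst, WithLp.ofLp_snd,
      mem_graphL2.1 hX, ← adjoint_inner_left, ← inner_add_left] at this
  exact inner_self_eq_zero.1 (h _)

theorem ker_sub_sup_ker_eq_top {X Y : E →L[𝕜] F}
    (h : ∀ u ∈ graphL2 X, (graphL2 Y).starProjection u ∈ graphL2 X) :
    (X - Y).ker ⊔ (1 + adjoint Y ∘L X).ker = ⊤ := by
  refine eq_top_iff.2 fun c _ ↦ ?_
  set u : WithLp 2 (E × F) := WithLp.toLp 2 (c, X c)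
  set p := (graphL2 Y).starProjection u
  have hu : u ∈ graphL2 X := mem_graphL2.2 rfl
  have hpX : p ∈ graphL2 X := h u hu
  have hpY : p ∈ graphL2 Y := Submodule.starProjection_apply_mem _ u
  refine Submodule.mem_sup.2 ⟨p.fst, ?_, (u - p).fst, ?_, ?_⟩
  · show X p.fst - Y p.fst = 0
    rw [← mem_graphL2.1 hpX, ← mem_graphL2.1 hpY, sub_self]
  · exact fst_mem_ker_of_mem_graphL2_of_mem_orthogonal (sub_mem hu hpX)
      (Submodule.sub_starProjection_mem_orthogonal u)
  · rw [WithLp.sub_fst, add_sub_cancel]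
    rfl

end

theorem unique_contractive_solution_of_trivial_kernel_imaginary_part_general
    {H0 H1 : Type*}
    [NormedAddCommGroup H0] [InnerProductSpace ℂ H0] [CompleteSpace H0]
    [NormedAddCommGroup H1] [InnerProductSpace ℂ H1] [CompleteSpace H1]
    (A0 : H0 →L[ℂ] H0) (A1 : H1 →L[ℂ] H1) (V : H1 →L[ℂ] H0)
    (hA0 : IsSelfAdjoint A0) (hA1 : IsSelfAdjoint A1)
    (B : WithLp 2 (H0 × H1) →L[ℂ] WithLp 2 (H0 × H1))
    (hB : ∀ u : WithLp 2 (H0 × H1),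
      WithLp.equiv 2 (H0 × H1) (B u) =
        (A0 (WithLp.equiv 2 (H0 × H1) u).1 + V (WithLp.equiv 2 (H0 × H1) u).2,
         ContinuousLinearMap.adjoint V (WithLp.equiv 2 (H0 × H1) u).1
           + A1 (WithLp.equiv 2 (H0 × H1) u).2))
    (X : H0 →L[ℂ] H1) (hXnorm : ‖X‖ ≤ 1)
    (hX : A1.comp X - X.comp A0 - X.comp (V.comp X) + ContinuousLinearMap.adjoint V = 0)
    (Q : WithLp 2 (H0 × H1) →L[ℂ] WithLp 2 (H0 × H1))
    (hQran : LinearMap.range (Q : WithLp 2 (H0 × H1) →ₗ[ℂ] WithLp 2 (H0 × H1)) =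
      (LinearMap.graph X.toLinearMap).map (WithLp.linearEquiv 2 ℂ (H0 × H1)).symm.toLinearMap)
    (hQcomm : ∀ R : WithLp 2 (H0 × H1) →L[ℂ] WithLp 2 (H0 × H1),
      IsIdempotentElem R → IsSelfAdjoint R →
      (∀ u ∈ LinearMap.range (R : WithLp 2 (H0 × H1) →ₗ[ℂ] WithLp 2 (H0 × H1)), B u ∈ LinearMap.range (R : WithLp 2 (H0 × H1) →ₗ[ℂ] WithLp 2 (H0 × H1))) → Q * R = R * Q)
    (hker : LinearMap.ker ((ContinuousLinearMap.id ℂ H0 - (ContinuousLinearMap.adjoint X).comp X :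
          H0 →L[ℂ] H0) : H0 →ₗ[ℂ] H0) ⊓
        LinearMap.ker ((V.comp X -
          (ContinuousLinearMap.adjoint X).comp (ContinuousLinearMap.adjoint V) : H0 →L[ℂ] H0) :
            H0 →ₗ[ℂ] H0) = ⊥) :
    ∀ Y : H0 →L[ℂ] H1, ‖Y‖ ≤ 1 →
        A1.comp Y - Y.comp A0 - Y.comp (V.comp Y) + ContinuousLinearMap.adjoint V = 0 →
        Y = X := by
  intro Y hY1 hY
  set P := (graphL2 Y).starProjection
  have hQP : Q * P = P * Q := hQcomm P (Submodule.isIdempotentElem_starProjection _)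
    (isSelfAdjoint_starProjection _)
    (by rw [Submodule.range_starProjection]; exact fun u ↦ IsRiccatiSolution.mapsTo_graphL2 hB hY)
  have hQran' :
      LinearMap.range (Q : WithLp 2 (H0 × H1) →ₗ[ℂ] WithLp 2 (H0 × H1)) = graphL2 X := hQran
  have hsup : (X - Y).ker ⊔ (1 + adjoint Y ∘L X).ker = ⊤ := by
    refine ker_sub_sup_ker_eq_top fun u hu ↦ ?_
    rw [← hQran'] at hu ⊢
    obtain ⟨v, rfl⟩ := hu
    exact ⟨P v, congr($hQP v)⟩
  have hK : (1 + adjoint Y ∘L X).ker = ⊥ :=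
    eq_bot_iff.2 <|
      (IsRiccatiSolution.ker_one_add_adjoint_comp_le hA0 hA1 hX hY hXnorm hY1 hsup).trans hker.le
  rw [hK, sup_bot_eq, LinearMap.ker_eq_top] at hsup
  exact (sub_eq_zero.1 (coe_injective hsup)).symm

theorem unique_contractive_solution_of_trivial_kernel_imaginary_part
    {H0 H1 : Type*}
    [NormedAddCommGroup H0] [InnerProductSpace ℂ H0] [CompleteSpace H0]
    [TopologicalSpace.SeparableSpace H0]
    [NormedAddCommGroup H1] [InnerProductSpace ℂ H1] [CompleteSpace H1]
    [TopologicalSpace.SeparableSpace H1]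
    (A0 : H0 →L[ℂ] H0) (A1 : H1 →L[ℂ] H1) (V : H1 →L[ℂ] H0)
    (hA0 : IsSelfAdjoint A0) (hA1 : IsSelfAdjoint A1)
    (B : WithLp 2 (H0 × H1) →L[ℂ] WithLp 2 (H0 × H1))
    (hB : ∀ u : WithLp 2 (H0 × H1),
      WithLp.equiv 2 (H0 × H1) (B u) =
        (A0 (WithLp.equiv 2 (H0 × H1) u).1 + V (WithLp.equiv 2 (H0 × H1) u).2,
         ContinuousLinearMap.adjoint V (WithLp.equiv 2 (H0 × H1) u).1
           + A1 (WithLp.equiv 2 (H0 × H1) u).2))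
    (X : H0 →L[ℂ] H1) (hXnorm : ‖X‖ ≤ 1)
    (hX : A1.comp X - X.comp A0 - X.comp (V.comp X) + ContinuousLinearMap.adjoint V = 0)
    (Q : WithLp 2 (H0 × H1) →L[ℂ] WithLp 2 (H0 × H1))
    (hQ : IsIdempotentElem Q) (hQsa : IsSelfAdjoint Q)
    (hQran : LinearMap.range (Q : WithLp 2 (H0 × H1) →ₗ[ℂ] WithLp 2 (H0 × H1)) =
      (LinearMap.graph X.toLinearMap).map (WithLp.linearEquiv 2 ℂ (H0 × H1)).symm.toLinearMap)
    (hQcomm : ∀ R : WithLp 2 (H0 × H1) →L[ℂ] WithLp 2 (H0 × H1),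
      IsIdempotentElem R → IsSelfAdjoint R →
      (∀ u ∈ LinearMap.range (R : WithLp 2 (H0 × H1) →ₗ[ℂ] WithLp 2 (H0 × H1)), B u ∈ LinearMap.range (R : WithLp 2 (H0 × H1) →ₗ[ℂ] WithLp 2 (H0 × H1))) → Q * R = R * Q)
    (hker : LinearMap.ker ((ContinuousLinearMap.id ℂ H0 - (ContinuousLinearMap.adjoint X).comp X :
          H0 →L[ℂ] H0) : H0 →ₗ[ℂ] H0) ⊓
        LinearMap.ker ((V.comp X -
          (ContinuousLinearMap.adjoint X).comp (ContinuousLinearMap.adjoint V) : H0 →L[ℂ] H0) :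
            H0 →ₗ[ℂ] H0) = ⊥) :
    ∀ Y : H0 →L[ℂ] H1, ‖Y‖ ≤ 1 →
        A1.comp Y - Y.comp A0 - Y.comp (V.comp Y) + ContinuousLinearMap.adjoint V = 0 →
        Y = X :=
  unique_contractive_solution_of_trivial_kernel_imaginary_part_general A0 A1 V hA0 hA1 B hB X hXnorm
    hX Q hQran hQcomm hker
end

section
/- Let X : H0 -> H1 be an everywhere-defined bounded solution of the Riccati equation A1 X - X A0 - X V X + V* = 0, and let L be a closed subspace of H0 with L ⊆ Ker(X V X - V*) that is invariant under both A0 and V X. Then L' = {x ⊕ Xx : x in L} is a subspace of H invariant under both the diagonal operator A, defined by A(x0 ⊕ x1) = A0 x0 ⊕ A1 x1, and the operator B. -/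
noncomputable section

/-! On `L` the kernel condition turns the Riccati equation into the intertwining relation
`A₁ X = X A₀`. Hence `A` maps `x ⊕ X x` to `A₀ x ⊕ X (A₀ x)`, and `B` maps it to
`y ⊕ X y` with `y = A₀ x + V X x`, since `V* x + A₁ X x = X V X x + X A₀ x`. -/

theorem Submodule.mem_map_id_prod_iff {R M N : Type*} [Semiring R] [AddCommMonoid M]
    [Module R M] [AddCommMonoid N] [Module R N] {L : Submodule R M} {X : M →ₗ[R] N}
    {x : M} {y : N} : (x, y) ∈ L.map (LinearMap.id.prod X) ↔ x ∈ L ∧ y = X x := by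
  constructor
  · rintro ⟨x, hx, hxy⟩
    cases hxy
    exact ⟨hx, rfl⟩
  · rintro ⟨hx, rfl⟩
    exact ⟨x, hx, rfl⟩

theorem ContinuousLinearMap.apply_apply_eq_of_riccati {R M N : Type*} [Ring R]
    [TopologicalSpace M] [AddCommGroup M] [Module R M]
    [TopologicalSpace N] [AddCommGroup N] [Module R N] [IsTopologicalAddGroup N]
    {A0 : M →L[R] M} {A1 : N →L[R] N} {V : N →L[R] M} {W X : M →L[R] N}
    (hX : A1.comp X - X.comp A0 - X.comp (V.comp X) + W = 0) {x : M}
    (hx : X (V (X x)) = W x) : A1 (X x) = X (A0 x) := by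
  have hXx := congrArg (fun T : M →L[R] N => T x) hX
  simp only [sub_apply, add_apply, coe_comp, Function.comp_apply, zero_apply, ← hx,
    sub_add_cancel, sub_eq_zero] at hXx
  exact hXx

theorem graph_restriction_invariant_under_A_and_B_general
    {H0 H1 : Type*}
    [NormedAddCommGroup H0] [InnerProductSpace ℂ H0] [CompleteSpace H0]
    [NormedAddCommGroup H1] [InnerProductSpace ℂ H1] [CompleteSpace H1]
    (A0 : H0 →L[ℂ] H0) (A1 : H1 →L[ℂ] H1) (V : H1 →L[ℂ] H0)
    (A B : H0 × H1 →L[ℂ] H0 × H1)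
    (hA : ∀ u : H0 × H1, A u = (A0 u.1, A1 u.2))
    (hB : ∀ u : H0 × H1, B u = (A0 u.1 + V u.2, ContinuousLinearMap.adjoint V u.1 + A1 u.2))
    (X : H0 →L[ℂ] H1)
    (hX : A1.comp X - X.comp A0 - X.comp (V.comp X) + ContinuousLinearMap.adjoint V = 0)
    (L : Submodule ℂ H0)
    (hLker : L ≤ LinearMap.ker (X.comp (V.comp X) - ContinuousLinearMap.adjoint V).toLinearMap)
    (hLA0 : L.map A0.toLinearMap ≤ L)
    (hLVX : L.map (V.comp X).toLinearMap ≤ L) :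
    (∀ u ∈ L.map (LinearMap.prod LinearMap.id X.toLinearMap),
      A u ∈ L.map (LinearMap.prod LinearMap.id X.toLinearMap)) ∧
    (∀ u ∈ L.map (LinearMap.prod LinearMap.id X.toLinearMap),
      B u ∈ L.map (LinearMap.prod LinearMap.id X.toLinearMap)) := by
  have hker : ∀ x ∈ L, X (V (X x)) = ContinuousLinearMap.adjoint V x :=
    fun x hx => sub_eq_zero.1 (hLker hx)
  have hA1X : ∀ x ∈ L, A1 (X x) = X (A0 x) :=
    fun x hx => ContinuousLinearMap.apply_apply_eq_of_riccati hX (hker x hx)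
  constructor
  · rintro ⟨x, y⟩ hu
    obtain ⟨hx, rfl⟩ := Submodule.mem_map_id_prod_iff.1 hu
    rw [Submodule.mem_map_id_prod_iff, hA]
    exact ⟨hLA0 ⟨x, hx, rfl⟩, hA1X x hx⟩
  · rintro ⟨x, y⟩ hu
    obtain ⟨hx, rfl⟩ := Submodule.mem_map_id_prod_iff.1 hu
    rw [Submodule.mem_map_id_prod_iff, hB]
    refine ⟨L.add_mem (hLA0 ⟨x, hx, rfl⟩) (hLVX ⟨x, hx, rfl⟩), ?_⟩
    simp only [ContinuousLinearMap.coe_coe, map_add, hker x hx, hA1X x hx, add_comm]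

/-- Let `X : H₀ → H₁` be a bounded solution of the Riccati equation
`A₁ X - X A₀ - X V X + V* = 0` and `L` a closed subspace of `H₀` with
`L ⊆ Ker (X V X - V*)` which is invariant under both `A₀` and `V X`.  Then
`L' = {x ⊕ X x : x ∈ L}` is a subspace of `H = H₀ ⊕ H₁` invariant under both the diagonal
operator `A (x₀ ⊕ x₁) = A₀ x₀ ⊕ A₁ x₁` and the block operator `B`. -/
theorem graph_restriction_invariant_under_A_and_B
    {H0 H1 : Type*}
    [NormedAddCommGroup H0] [InnerProductSpace ℂ H0] [CompleteSpace H0]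
    [TopologicalSpace.SeparableSpace H0]
    [NormedAddCommGroup H1] [InnerProductSpace ℂ H1] [CompleteSpace H1]
    [TopologicalSpace.SeparableSpace H1]
    (A0 : H0 →L[ℂ] H0) (A1 : H1 →L[ℂ] H1) (V : H1 →L[ℂ] H0)
    (hA0 : IsSelfAdjoint A0) (hA1 : IsSelfAdjoint A1)
    (A B : H0 × H1 →L[ℂ] H0 × H1)
    (hA : ∀ u : H0 × H1, A u = (A0 u.1, A1 u.2))
    (hB : ∀ u : H0 × H1, B u = (A0 u.1 + V u.2, ContinuousLinearMap.adjoint V u.1 + A1 u.2))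
    (X : H0 →L[ℂ] H1)
    (hX : A1.comp X - X.comp A0 - X.comp (V.comp X) + ContinuousLinearMap.adjoint V = 0)
    (L : Submodule ℂ H0) (hLclosed : IsClosed (L : Set H0))
    (hLker : L ≤ LinearMap.ker (X.comp (V.comp X) - ContinuousLinearMap.adjoint V).toLinearMap)
    (hLA0 : L.map A0.toLinearMap ≤ L)
    (hLVX : L.map (V.comp X).toLinearMap ≤ L) :
    (∀ u ∈ L.map (LinearMap.prod LinearMap.id X.toLinearMap),
      A u ∈ L.map (LinearMap.prod LinearMap.id X.toLinearMap)) ∧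
    (∀ u ∈ L.map (LinearMap.prod LinearMap.id X.toLinearMap),
      B u ∈ L.map (LinearMap.prod LinearMap.id X.toLinearMap)) :=
  graph_restriction_invariant_under_A_and_B_general A0 A1 V A B hA hB X hX L hLker hLA0 hLVX

end
end

section
/- Let X : H0 -> H1 be any everywhere-defined bounded solution of the Riccati equation A1 X - X A0 - X V X + V* = 0. Let R be the set of all closed subspaces L of H0 such that L ⊆ Ker(I - X*X) ∩ Ker(X V X - V*) and L reduces both A0 and V X, and let R* be the set of all closed subspaces L* of H1 such that L* ⊆ Ker(I - XX*) ∩ Ker(X* V* X* - V) and L* reduces both A1 and V* X*. Then the map sending L to its image X(L) = {Xx : x in L} is a bijection from R onto R*, with inverse sending L* to X*(L*) = {X*y : y in L*}. -/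
/-!
On `L ∈ R` we have `X* X = 1`, so `X*` inverts `X` on `L` and
`X(L) = (X*)⁻¹(L) ∩ {y | X X* y = y}` is closed. There also `X V X = V*`, so the Riccati equation
reduces to `A₁ X = X A₀`; and the same two identities make `V X` symmetric on `L`, which reduces
it, whence `V X = X* V*` on `L`. These identities carry each defining condition of `R` over to
`X(L)`. The adjoint Riccati equation puts `X*` in the same position, so `L* ↦ X*(L*)` maps `R*`
back into `R`.
-/

open ContinuousLinearMap Module End Submodule
open scoped InnerProduct InnerProductSpace

theorem ContinuousLinearMap.mem_ker_sub_iff {R M N : Type*} [Ring R] [TopologicalSpace M]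
    [AddCommGroup M] [Module R M] [TopologicalSpace N] [AddCommGroup N] [Module R N]
    [IsTopologicalAddGroup N] {T S : M →L[R] N} {x : M} :
    x ∈ LinearMap.ker ((T - S : M →L[R] N) : M →ₗ[R] N) ↔ T x = S x := by
  rw [LinearMap.mem_ker, coe_coe, sub_apply, sub_eq_zero]

theorem Submodule.map_mem_invtSubmodule_of_intertwine {R M N : Type*} [Semiring R]
    [AddCommMonoid M] [Module R M] [AddCommMonoid N] [Module R N] {p : Submodule R M}
    {f : M →ₗ[R] N} {S : End R N} {T : End R M} (hp : p ∈ invtSubmodule T)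
    (h : ∀ x ∈ p, S (f x) = f (T x)) : p.map f ∈ invtSubmodule S := by
  rintro _ ⟨x, hx, rfl⟩
  exact ⟨T x, hp hx, (h x hx).symm⟩

theorem Submodule.map_map_eq_self_of_leftInvOn {R M N : Type*} [Semiring R]
    [AddCommMonoid M] [Module R M] [AddCommMonoid N] [Module R N] {p : Submodule R M}
    {f : M →ₗ[R] N} {g : N →ₗ[R] M} (h : Set.LeftInvOn g f p) : (p.map f).map g = p :=
  SetLike.coe_injective (by rw [map_coe, map_coe, h.image_image])

theorem Set.LeftInvOn.isClosed_image {α β : Type*} [TopologicalSpace α] [TopologicalSpace β]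
    [T2Space β] {f : α → β} {g : β → α} {s : Set α} (h : Set.LeftInvOn g f s)
    (hf : Continuous f) (hg : Continuous g) (hs : IsClosed s) : IsClosed (f '' s) := by
  have himage : f '' s = g ⁻¹' s ∩ {y | f (g y) = y} := by
    ext y
    constructor
    · rintro ⟨x, hx, rfl⟩
      exact ⟨by rwa [Set.mem_preimage, h hx], congrArg f (h hx)⟩
    · rintro ⟨hy, hfg⟩
      exact ⟨g y, hy, hfg⟩
  rw [himage]
  exact (hs.preimage hg).inter (isClosed_eq (hf.comp hg) continuous_id)

section

variable {𝕜 E F : Type*} [RCLike 𝕜]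
  [NormedAddCommGroup E] [InnerProductSpace 𝕜 E] [CompleteSpace E]
  [NormedAddCommGroup F] [InnerProductSpace 𝕜 F] [CompleteSpace F]

theorem ContinuousLinearMap.apply_eq_adjoint_apply_of_reduces {T : E →L[𝕜] E}
    {L : Submodule 𝕜 E} (hL : L ∈ invtSubmodule (T : E →ₗ[𝕜] E))
    (hLperp : Lᗮ ∈ invtSubmodule (T : E →ₗ[𝕜] E))
    (hT : ∀ x ∈ L, ∀ z ∈ L, ⟪T z, x⟫_𝕜 = ⟪z, T x⟫_𝕜) {x : E} (hx : x ∈ L) : T x = (T†) x := by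
  have hperp : T x - (T†) x ∈ Lᗮ := by
    refine (mem_orthogonal _ _).mpr fun z hz => ?_
    rw [inner_sub_right, adjoint_inner_right, hT x hx z hz, sub_self]
  have hperpperp : T x - (T†) x ∈ Lᗮᗮ := by
    refine (mem_orthogonal _ _).mpr fun z hz => ?_
    rw [inner_sub_right, adjoint_inner_right, sub_eq_zero]
    exact (inner_left_of_mem_orthogonal (K := L) (hL hx) hz).trans
      (inner_left_of_mem_orthogonal (K := L) hx (hLperp hz)).symm
  have h0 : T x - (T†) x ∈ Lᗮ ⊓ Lᗮᗮ := ⟨hperp, hperpperp⟩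
  rwa [Lᗮ.inf_orthogonal_eq_bot, mem_bot, sub_eq_zero] at h0

/-- The paper's `R` is `riccatiSubspaces A₀ V X`, and its `R*` is `riccatiSubspaces A₁ V† X†`
(up to `X†† = X` and `V†† = V`). -/
def riccatiSubspaces (A : E →L[𝕜] E) (W : F →L[𝕜] E) (X : E →L[𝕜] F) : Set (Submodule 𝕜 E) :=
  {L | IsClosed (L : Set E) ∧
    L ≤ LinearMap.ker ((ContinuousLinearMap.id 𝕜 E - X† ∘L X : E →L[𝕜] E) : E →ₗ[𝕜] E) ⊓
      LinearMap.ker ((X ∘L (W ∘L X) - W† : E →L[𝕜] F) : E →ₗ[𝕜] F) ∧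
    (L ∈ invtSubmodule (A : E →ₗ[𝕜] E) ∧ Lᗮ ∈ invtSubmodule (A : E →ₗ[𝕜] E)) ∧
    (L ∈ invtSubmodule ((W ∘L X : E →L[𝕜] E) : E →ₗ[𝕜] E) ∧
      Lᗮ ∈ invtSubmodule ((W ∘L X : E →L[𝕜] E) : E →ₗ[𝕜] E))}

theorem leftInvOn_adjoint_of_mem_riccatiSubspaces {A : E →L[𝕜] E} {W : F →L[𝕜] E}
    {X : E →L[𝕜] F} {L : Submodule 𝕜 E} (hL : L ∈ riccatiSubspaces A W X) :
    Set.LeftInvOn (X†) X L :=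
  fun _ hx => (mem_ker_sub_iff.mp (hL.2.1 hx).1).symm

theorem riccati_intertwines {A : E →L[𝕜] E} {B : F →L[𝕜] F} {W : F →L[𝕜] E} {X : E →L[𝕜] F}
    (hX : B ∘L X - X ∘L A - X ∘L (W ∘L X) + W† = 0) {L : Submodule 𝕜 E}
    (hL : L ∈ riccatiSubspaces A W X) : ∀ x ∈ L, B (X x) = X (A x) := by
  intro x hx
  have h := congr($hX x)
  rw [add_apply, sub_apply, sub_apply, mem_ker_sub_iff.mp (hL.2.1 hx).2, sub_add_cancel,
    zero_apply, sub_eq_zero] at h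
  exact h

theorem riccati_adjoint_intertwines {A : E →L[𝕜] E} {B : F →L[𝕜] F} {W : F →L[𝕜] E}
    {X : E →L[𝕜] F} (hA : IsSelfAdjoint A) (hB : IsSelfAdjoint B)
    (hX : B ∘L X - X ∘L A - X ∘L (W ∘L X) + W† = 0) {M : Submodule 𝕜 F}
    (hM : M ∈ riccatiSubspaces B (W†) (X†)) : ∀ y ∈ M, A ((X†) y) = (X†) (B y) := by
  intro y hy
  have hX' : X† ∘L B - A ∘L X† - X† ∘L (W† ∘L X†) + W = 0 := by
    simpa only [map_add, map_sub, map_zero, adjoint_comp, adjoint_adjoint, hA.adjoint_eq,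
      hB.adjoint_eq, comp_assoc] using congr(adjoint $hX)
  have h := congr($hX' y)
  rw [add_apply, sub_apply, sub_apply, mem_ker_sub_iff.mp (hM.2.1 hy).2, adjoint_adjoint,
    sub_add_cancel, zero_apply, sub_eq_zero] at h
  exact h.symm

theorem map_mem_riccatiSubspaces {A : E →L[𝕜] E} {B : F →L[𝕜] F} {W : F →L[𝕜] E}
    {X : E →L[𝕜] F} {L : Submodule 𝕜 E} (hB : IsSelfAdjoint B) (hL : L ∈ riccatiSubspaces A W X)
    (hBA : ∀ x ∈ L, B (X x) = X (A x)) :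
    L.map (X : E →ₗ[𝕜] F) ∈ riccatiSubspaces B (W†) (X†) := by
  have hXX := leftInvOn_adjoint_of_mem_riccatiSubspaces hL
  obtain ⟨hLc, hLker, ⟨hAL, -⟩, hWXL, hWXLperp⟩ := hL
  have hXWX (x : E) (hx : x ∈ L) : X (W (X x)) = (W†) x := mem_ker_sub_iff.mp (hLker hx).2
  have hWX (x : E) (hx : x ∈ L) : W (X x) = (X†) ((W†) x) := by
    refine (apply_eq_adjoint_apply_of_reduces hWXL hWXLperp (fun u hu z hz => ?_) hx).trans ?_
    · rw [comp_apply, comp_apply, ← adjoint_inner_right, ← hXWX u hu, ← adjoint_inner_left,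
        hXX hz]
    · rw [adjoint_comp, comp_apply]
  have hXWL : L.map (X : E →ₗ[𝕜] F) ∈ invtSubmodule ((X ∘L W : F →L[𝕜] F) : F →ₗ[𝕜] F) :=
    map_mem_invtSubmodule_of_intertwine hWXL fun x _ => rfl
  have hBL : L.map (X : E →ₗ[𝕜] F) ∈ invtSubmodule (B : F →ₗ[𝕜] F) :=
    map_mem_invtSubmodule_of_intertwine hAL hBA
  simp only [riccatiSubspaces, adjoint_adjoint]
  refine ⟨?_, ?_, ⟨?_, ?_⟩, ?_, ?_⟩
  · rw [map_coe]
    exact hXX.isClosed_image X.continuous (X†).continuous hLc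
  · rintro _ ⟨x, hx, rfl⟩
    refine ⟨mem_ker_sub_iff.mpr ?_, mem_ker_sub_iff.mpr ?_⟩
    · simp [hXX hx]
    · simp [hXX hx, hWX x hx]
  · exact hBL
  · exact orthogonal_mem_invtSubmodule (by rwa [hB.adjoint_eq])
  · exact map_mem_invtSubmodule_of_intertwine hWXL fun x hx => by simp [hXX hx, hXWX x hx]
  · exact orthogonal_mem_invtSubmodule (by rwa [adjoint_comp, adjoint_adjoint, adjoint_adjoint])

end

theorem image_bijection_reducing_subspaces_general
    {H0 H1 : Type*}
    [NormedAddCommGroup H0] [InnerProductSpace ℂ H0] [CompleteSpace H0]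
    [NormedAddCommGroup H1] [InnerProductSpace ℂ H1] [CompleteSpace H1]
    (A0 : H0 →L[ℂ] H0) (A1 : H1 →L[ℂ] H1) (V : H1 →L[ℂ] H0)
    (hA0 : IsSelfAdjoint A0) (hA1 : IsSelfAdjoint A1)
    (X : H0 →L[ℂ] H1)
    (hX : A1.comp X - X.comp A0 - X.comp (V.comp X) + ContinuousLinearMap.adjoint V = 0) :
    Set.BijOn (fun L : Submodule ℂ H0 => L.map (σ₁₂ := RingHom.id ℂ) X)
      {L : Submodule ℂ H0 | IsClosed (L : Set H0) ∧
        L ≤ LinearMap.ker (τ₁₂ := RingHom.id ℂ) (M₂ := H0) (ContinuousLinearMap.id ℂ H0 - (ContinuousLinearMap.adjoint X).comp X) ⊓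
            LinearMap.ker (τ₁₂ := RingHom.id ℂ) (M₂ := H1) (X.comp (V.comp X) - ContinuousLinearMap.adjoint V) ∧
        (L.map (σ₁₂ := RingHom.id ℂ) A0 ≤ L ∧ Lᗮ.map (σ₁₂ := RingHom.id ℂ) A0 ≤ Lᗮ) ∧
        (L.map (σ₁₂ := RingHom.id ℂ) (V.comp X) ≤ L ∧ Lᗮ.map (σ₁₂ := RingHom.id ℂ) (V.comp X) ≤ Lᗮ)}
      {Lstar : Submodule ℂ H1 | IsClosed (Lstar : Set H1) ∧
        Lstar ≤
          LinearMap.ker (τ₁₂ := RingHom.id ℂ) (M₂ := H1) (ContinuousLinearMap.id ℂ H1 - X.comp (ContinuousLinearMap.adjoint X)) ⊓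
          LinearMap.ker (τ₁₂ := RingHom.id ℂ) (M₂ := H0) ((ContinuousLinearMap.adjoint X).comp
            ((ContinuousLinearMap.adjoint V).comp (ContinuousLinearMap.adjoint X)) - V) ∧
        (Lstar.map (σ₁₂ := RingHom.id ℂ) A1 ≤ Lstar ∧ Lstarᗮ.map (σ₁₂ := RingHom.id ℂ) A1 ≤ Lstarᗮ) ∧
        (Lstar.map (σ₁₂ := RingHom.id ℂ) ((ContinuousLinearMap.adjoint V).comp (ContinuousLinearMap.adjoint X)) ≤ Lstar ∧
          Lstarᗮ.map (σ₁₂ := RingHom.id ℂ) ((ContinuousLinearMap.adjoint V).comp (ContinuousLinearMap.adjoint X))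
            ≤ Lstarᗮ)} ∧
    Set.InvOn (fun Lstar : Submodule ℂ H1 => Lstar.map (σ₁₂ := RingHom.id ℂ) (ContinuousLinearMap.adjoint X))
      (fun L : Submodule ℂ H0 => L.map (σ₁₂ := RingHom.id ℂ) X)
      {L : Submodule ℂ H0 | IsClosed (L : Set H0) ∧
        L ≤ LinearMap.ker (τ₁₂ := RingHom.id ℂ) (M₂ := H0) (ContinuousLinearMap.id ℂ H0 - (ContinuousLinearMap.adjoint X).comp X) ⊓
            LinearMap.ker (τ₁₂ := RingHom.id ℂ) (M₂ := H1) (X.comp (V.comp X) - ContinuousLinearMap.adjoint V) ∧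
        (L.map (σ₁₂ := RingHom.id ℂ) A0 ≤ L ∧ Lᗮ.map (σ₁₂ := RingHom.id ℂ) A0 ≤ Lᗮ) ∧
        (L.map (σ₁₂ := RingHom.id ℂ) (V.comp X) ≤ L ∧ Lᗮ.map (σ₁₂ := RingHom.id ℂ) (V.comp X) ≤ Lᗮ)}
      {Lstar : Submodule ℂ H1 | IsClosed (Lstar : Set H1) ∧
        Lstar ≤
          LinearMap.ker (τ₁₂ := RingHom.id ℂ) (M₂ := H1) (ContinuousLinearMap.id ℂ H1 - X.comp (ContinuousLinearMap.adjoint X)) ⊓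
          LinearMap.ker (τ₁₂ := RingHom.id ℂ) (M₂ := H0) ((ContinuousLinearMap.adjoint X).comp
            ((ContinuousLinearMap.adjoint V).comp (ContinuousLinearMap.adjoint X)) - V) ∧
        (Lstar.map (σ₁₂ := RingHom.id ℂ) A1 ≤ Lstar ∧ Lstarᗮ.map (σ₁₂ := RingHom.id ℂ) A1 ≤ Lstarᗮ) ∧
        (Lstar.map (σ₁₂ := RingHom.id ℂ) ((ContinuousLinearMap.adjoint V).comp (ContinuousLinearMap.adjoint X)) ≤ Lstar ∧
          Lstarᗮ.map (σ₁₂ := RingHom.id ℂ) ((ContinuousLinearMap.adjoint V).comp (ContinuousLinearMap.adjoint X))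
            ≤ Lstarᗮ)} := by
  have hfwd : Set.MapsTo (fun L : Submodule ℂ H0 => L.map (X : H0 →ₗ[ℂ] H1))
      (riccatiSubspaces A0 V X) (riccatiSubspaces A1 (V†) (X†)) := fun L hL =>
    map_mem_riccatiSubspaces hA1 hL (riccati_intertwines hX hL)
  have hbwd : Set.MapsTo (fun M : Submodule ℂ H1 => M.map ((X†) : H1 →ₗ[ℂ] H0))
      (riccatiSubspaces A1 (V†) (X†)) (riccatiSubspaces A0 V X) := fun M hM => by
    simpa only [adjoint_adjoint] using
      map_mem_riccatiSubspaces hA0 hM (riccati_adjoint_intertwines hA0 hA1 hX hM)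
  have hinv : Set.InvOn (fun M : Submodule ℂ H1 => M.map ((X†) : H1 →ₗ[ℂ] H0))
      (fun L : Submodule ℂ H0 => L.map (X : H0 →ₗ[ℂ] H1))
      (riccatiSubspaces A0 V X) (riccatiSubspaces A1 (V†) (X†)) :=
    ⟨fun L hL => map_map_eq_self_of_leftInvOn (leftInvOn_adjoint_of_mem_riccatiSubspaces hL),
      fun M hM => by
        simpa only [adjoint_adjoint] using
          map_map_eq_self_of_leftInvOn (leftInvOn_adjoint_of_mem_riccatiSubspaces hM)⟩
  simpa only [riccatiSubspaces, mem_invtSubmodule_iff_map_le, adjoint_adjoint] using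
    And.intro (hinv.bijOn hfwd hbwd) hinv

/-- Let `X : H₀ → H₁` be a bounded solution of the Riccati equation.
Let `R` be the set of all closed subspaces `L ⊆ Ker (I - X* X) ⊓ Ker (X V X - V*)` of `H₀`
reducing both `A₀` and `V X`, and `R*` the set of all closed subspaces
`L* ⊆ Ker (I - X X*) ⊓ Ker (X* V* X* - V)` of `H₁` reducing both `A₁` and `V* X*`.
Then `L ↦ X(L)` is a bijection from `R` onto `R*` with inverse `L* ↦ X*(L*)`. -/
theorem image_bijection_reducing_subspaces
    {H0 H1 : Type*}
    [NormedAddCommGroup H0] [InnerProductSpace ℂ H0] [CompleteSpace H0]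
    [TopologicalSpace.SeparableSpace H0]
    [NormedAddCommGroup H1] [InnerProductSpace ℂ H1] [CompleteSpace H1]
    [TopologicalSpace.SeparableSpace H1]
    (A0 : H0 →L[ℂ] H0) (A1 : H1 →L[ℂ] H1) (V : H1 →L[ℂ] H0)
    (hA0 : IsSelfAdjoint A0) (hA1 : IsSelfAdjoint A1)
    (X : H0 →L[ℂ] H1)
    (hX : A1.comp X - X.comp A0 - X.comp (V.comp X) + ContinuousLinearMap.adjoint V = 0) :
    Set.BijOn (fun L : Submodule ℂ H0 => L.map (σ₁₂ := RingHom.id ℂ) X)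
      {L : Submodule ℂ H0 | IsClosed (L : Set H0) ∧
        L ≤ LinearMap.ker (τ₁₂ := RingHom.id ℂ) (M₂ := H0) (ContinuousLinearMap.id ℂ H0 - (ContinuousLinearMap.adjoint X).comp X) ⊓
            LinearMap.ker (τ₁₂ := RingHom.id ℂ) (M₂ := H1) (X.comp (V.comp X) - ContinuousLinearMap.adjoint V) ∧
        (L.map (σ₁₂ := RingHom.id ℂ) A0 ≤ L ∧ Lᗮ.map (σ₁₂ := RingHom.id ℂ) A0 ≤ Lᗮ) ∧
        (L.map (σ₁₂ := RingHom.id ℂ) (V.comp X) ≤ L ∧ Lᗮ.map (σ₁₂ := RingHom.id ℂ) (V.comp X) ≤ Lᗮ)}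
      {Lstar : Submodule ℂ H1 | IsClosed (Lstar : Set H1) ∧
        Lstar ≤
          LinearMap.ker (τ₁₂ := RingHom.id ℂ) (M₂ := H1) (ContinuousLinearMap.id ℂ H1 - X.comp (ContinuousLinearMap.adjoint X)) ⊓
          LinearMap.ker (τ₁₂ := RingHom.id ℂ) (M₂ := H0) ((ContinuousLinearMap.adjoint X).comp
            ((ContinuousLinearMap.adjoint V).comp (ContinuousLinearMap.adjoint X)) - V) ∧
        (Lstar.map (σ₁₂ := RingHom.id ℂ) A1 ≤ Lstar ∧ Lstarᗮ.map (σ₁₂ := RingHom.id ℂ) A1 ≤ Lstarᗮ) ∧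
        (Lstar.map (σ₁₂ := RingHom.id ℂ) ((ContinuousLinearMap.adjoint V).comp (ContinuousLinearMap.adjoint X)) ≤ Lstar ∧
          Lstarᗮ.map (σ₁₂ := RingHom.id ℂ) ((ContinuousLinearMap.adjoint V).comp (ContinuousLinearMap.adjoint X))
            ≤ Lstarᗮ)} ∧
    Set.InvOn (fun Lstar : Submodule ℂ H1 => Lstar.map (σ₁₂ := RingHom.id ℂ) (ContinuousLinearMap.adjoint X))
      (fun L : Submodule ℂ H0 => L.map (σ₁₂ := RingHom.id ℂ) X)
      {L : Submodule ℂ H0 | IsClosed (L : Set H0) ∧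
        L ≤ LinearMap.ker (τ₁₂ := RingHom.id ℂ) (M₂ := H0) (ContinuousLinearMap.id ℂ H0 - (ContinuousLinearMap.adjoint X).comp X) ⊓
            LinearMap.ker (τ₁₂ := RingHom.id ℂ) (M₂ := H1) (X.comp (V.comp X) - ContinuousLinearMap.adjoint V) ∧
        (L.map (σ₁₂ := RingHom.id ℂ) A0 ≤ L ∧ Lᗮ.map (σ₁₂ := RingHom.id ℂ) A0 ≤ Lᗮ) ∧
        (L.map (σ₁₂ := RingHom.id ℂ) (V.comp X) ≤ L ∧ Lᗮ.map (σ₁₂ := RingHom.id ℂ) (V.comp X) ≤ Lᗮ)}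
      {Lstar : Submodule ℂ H1 | IsClosed (Lstar : Set H1) ∧
        Lstar ≤
          LinearMap.ker (τ₁₂ := RingHom.id ℂ) (M₂ := H1) (ContinuousLinearMap.id ℂ H1 - X.comp (ContinuousLinearMap.adjoint X)) ⊓
          LinearMap.ker (τ₁₂ := RingHom.id ℂ) (M₂ := H0) ((ContinuousLinearMap.adjoint X).comp
            ((ContinuousLinearMap.adjoint V).comp (ContinuousLinearMap.adjoint X)) - V) ∧
        (Lstar.map (σ₁₂ := RingHom.id ℂ) A1 ≤ Lstar ∧ Lstarᗮ.map (σ₁₂ := RingHom.id ℂ) A1 ≤ Lstarᗮ) ∧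
        (Lstar.map (σ₁₂ := RingHom.id ℂ) ((ContinuousLinearMap.adjoint V).comp (ContinuousLinearMap.adjoint X)) ≤ Lstar ∧
          Lstarᗮ.map (σ₁₂ := RingHom.id ℂ) ((ContinuousLinearMap.adjoint V).comp (ContinuousLinearMap.adjoint X))
            ≤ Lstarᗮ)} :=
  image_bijection_reducing_subspaces_general A0 A1 V hA0 hA1 X hX
end

section
/- If X : H0 -> H1 is an everywhere-defined bounded solution of the Riccati equation A1 X - X A0 - X V X + V* = 0, then the bounded operator (A0 + X*V*)(I + X*X) on H0 is self-adjoint. -/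
/-- If `X : H₀ → H₁` is a bounded solution of the Riccati equation
`A₁ X - X A₀ - X V X + V* = 0`, then the operator `(A₀ + X* V*)(I + X* X)` on `H₀`
is self-adjoint. -/
theorem isSelfAdjoint_of_riccati_solution
    {H0 H1 : Type*}
    [NormedAddCommGroup H0] [InnerProductSpace ℂ H0] [CompleteSpace H0]
    [TopologicalSpace.SeparableSpace H0]
    [NormedAddCommGroup H1] [InnerProductSpace ℂ H1] [CompleteSpace H1]
    [TopologicalSpace.SeparableSpace H1]
    (A0 : H0 →L[ℂ] H0) (A1 : H1 →L[ℂ] H1) (V : H1 →L[ℂ] H0)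
    (hA0 : IsSelfAdjoint A0) (hA1 : IsSelfAdjoint A1)
    (X : H0 →L[ℂ] H1)
    (hX : A1.comp X - X.comp A0 - X.comp (V.comp X) + ContinuousLinearMap.adjoint V = 0) :
    IsSelfAdjoint
      ((A0 + (ContinuousLinearMap.adjoint X).comp (ContinuousLinearMap.adjoint V)).comp
        (ContinuousLinearMap.id ℂ H0 + (ContinuousLinearMap.adjoint X).comp X)) := by
  have key : X.comp (V.comp X) = A1.comp X - X.comp A0 + ContinuousLinearMap.adjoint V := by
    rw [← sub_eq_zero, show X.comp (V.comp X) -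
      (A1.comp X - X.comp A0 + ContinuousLinearMap.adjoint V) =
      -(A1.comp X - X.comp A0 - X.comp (V.comp X) + ContinuousLinearMap.adjoint V) from by abel,
      hX, neg_zero]
  have keyadj : (ContinuousLinearMap.adjoint X).comp
      ((ContinuousLinearMap.adjoint V).comp (ContinuousLinearMap.adjoint X)) =
      (ContinuousLinearMap.adjoint X).comp A1 - A0.comp (ContinuousLinearMap.adjoint X) + V := by
    have h := congrArg (ContinuousLinearMap.adjoint (𝕜 := ℂ)) key
    simpa [ContinuousLinearMap.adjoint_comp, map_add, map_sub, hA0.adjoint_eq,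
      hA1.adjoint_eq, ContinuousLinearMap.adjoint_adjoint, ContinuousLinearMap.comp_assoc] using h
  have keyadj2 := congrArg (fun T => T.comp X) keyadj
  simp only [ContinuousLinearMap.sub_comp, ContinuousLinearMap.add_comp,
    ContinuousLinearMap.comp_assoc] at keyadj2
  rw [ContinuousLinearMap.isSelfAdjoint_iff']
  simp only [ContinuousLinearMap.adjoint_comp, map_add, ContinuousLinearMap.adjoint_id,
    hA0.adjoint_eq, ContinuousLinearMap.adjoint_adjoint]
  simp only [ContinuousLinearMap.add_comp, ContinuousLinearMap.comp_add, ContinuousLinearMap.sub_comp,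
    ContinuousLinearMap.comp_sub, ContinuousLinearMap.comp_id, ContinuousLinearMap.id_comp,
    ContinuousLinearMap.comp_assoc]
  rw [key, keyadj2]
  simp only [ContinuousLinearMap.add_comp, ContinuousLinearMap.comp_add, ContinuousLinearMap.sub_comp,
    ContinuousLinearMap.comp_sub, ContinuousLinearMap.comp_assoc]
  abel
end
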